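/- For all graphs G and H and every integer s ≥ 1, scol_s(G ⊠ H) ≤ scol_s(G)·(Δ(H^s)+1) and wcol_s(G ⊠ H) ≤ wcol_s(G)·(Δ(H^s)+1). -/

import Mathlib

open SimpleGraph

variable {V W : Type}

/-- The strong product of two simple graphs. -/
def strongProd (G : SimpleGraph V) (H : SimpleGraph W) : SimpleGraph (V × W) where
  Adj a b := a ≠ b ∧ (a.1 = b.1 ∨ G.Adj a.1 b.1) ∧ (a.2 = b.2 ∨ H.Adj a.2 b.2)
  symm := by
    constructor
    rintro a b ⟨hne, h1, h2⟩
    exact ⟨hne.symm, by tauto, by tauto⟩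
  loopless := ⟨fun a h => h.1 rfl⟩

infixl:70 " ⊠ " => strongProd

/-- The lexicographic product of two simple graphs. -/
def lexProd (G : SimpleGraph V) (H : SimpleGraph W) : SimpleGraph (V × W) where
  Adj a b := G.Adj a.1 b.1 ∨ (a.1 = b.1 ∧ H.Adj a.2 b.2)
  symm := by
    constructor
    rintro a b (h | ⟨h, h'⟩)
    · exact Or.inl h.symm
    · exact Or.inr ⟨h.symm, h'.symm⟩
  loopless := by
    constructor
    rintro a (h | ⟨_, h⟩)
    · exact G.loopless.irrefl _ h
    · exact H.loopless.irrefl _ h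

/-- `G` is contained in `H`: `G` is isomorphic to a subgraph of `H`. -/
def Contains (G : SimpleGraph V) (H : SimpleGraph W) : Prop :=
  ∃ f : V → W, Function.Injective f ∧ ∀ ⦃u v⦄, G.Adj u v → H.Adj (f u) (f v)

/-- `(T, B)` is a tree-decomposition of `G`. -/
def IsTreeDecomp {ι : Type} (G : SimpleGraph V) (T : SimpleGraph ι) (B : ι → Set V) : Prop :=
  T.IsTree ∧
  (∀ ⦃u v⦄, G.Adj u v → ∃ i, u ∈ B i ∧ v ∈ B i) ∧
  (∀ v : V, (T.induce {i | v ∈ B i}).Connected)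

/-- The treewidth of `G` is at most `t`. -/
def TreewidthLE (G : SimpleGraph V) (t : ℕ) : Prop :=
  ∃ (ι : Type) (T : SimpleGraph ι) (B : ι → Set V),
    IsTreeDecomp G T B ∧ ∀ i, (B i).Finite ∧ (B i).ncard ≤ t + 1

/-- The row treewidth of `G` is at most `t`: `G` is contained in `H ⊠ P`
for some graph `H` of treewidth at most `t` and some path `P`. -/
def RowTreewidthLE (G : SimpleGraph V) (t : ℕ) : Prop :=
  ∃ (ι : Type) (H : SimpleGraph ι) (n : ℕ),
    TreewidthLE H t ∧ Contains G (H ⊠ pathGraph n)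

/-- `μ` is a model of an `r`-shallow minor `H` in `G`: branch sets are connected,
pairwise disjoint, of radius at most `r`, with adjacent branch sets for each edge of `H`. -/
def IsShallowMinorModel (H : SimpleGraph W) (G : SimpleGraph V) (r : ℕ) (μ : W → Set V) : Prop :=
  (∀ w, (G.induce (μ w)).Connected) ∧
  (∀ w, ∃ c : μ w, ∀ u : μ w, (G.induce (μ w)).dist c u ≤ r) ∧
  (Pairwise fun w w' => Disjoint (μ w) (μ w')) ∧
  (∀ ⦃w w'⦄, H.Adj w w' → ∃ u ∈ μ w, ∃ v ∈ μ w', G.Adj u v)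

/-- `H` is an `r`-shallow minor of `G`. -/
def ShallowMinor (H : SimpleGraph W) (G : SimpleGraph V) (r : ℕ) : Prop :=
  ∃ μ : W → Set V, IsShallowMinorModel H G r μ

/-- `H` is an `(m/2)`-shallow topological minor of `G`: a subgraph of `G` is an
`m`-subdivision of `H`, i.e. each edge of `H` is replaced by a path of length at most `m+1`,
and these paths are internally disjoint. -/
def ShallowTopMinor (H : SimpleGraph W) (G : SimpleGraph V) (m : ℕ) : Prop :=
  ∃ f : W → V, Function.Injective f ∧
  ∃ P : ∀ ⦃u v⦄, H.Adj u v → G.Walk (f u) (f v),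
    (∀ ⦃u v⦄ (h : H.Adj u v), (P h).IsPath ∧ (P h).length ≤ m + 1 ∧
      ∀ x ∈ (P h).support, x ∈ Set.range f → (x = f u ∨ x = f v)) ∧
    (∀ ⦃u v x y⦄ (h₁ : H.Adj u v) (h₂ : H.Adj x y), s(u,v) ≠ s(x,y) →
      ∀ z ∈ (P h₁).support, z ∈ (P h₂).support →
        (z = f u ∨ z = f v) ∧ (z = f x ∨ z = f y))

/-- The `s`-th power of a graph: vertices at distance at most `s` are adjacent. -/
def powG (G : SimpleGraph V) (s : ℕ) : SimpleGraph V where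
  Adj u v := u ≠ v ∧ ∃ p : G.Walk u v, p.length ≤ s
  symm := by
    constructor
    rintro u v ⟨h, p, hp⟩
    exact ⟨h.symm, p.reverse, by simpa using hp⟩
  loopless := ⟨fun v h => h.1 rfl⟩

/-- The maximum degree of `G` is at most `d`. -/
def MaxDegLE (G : SimpleGraph V) (d : ℕ) : Prop :=
  ∀ v, (G.neighborSet v).Finite ∧ (G.neighborSet v).ncard ≤ d
open SimpleGraph
variable {V W : Type}

/-- `R(G,⪯,v,s)`: vertices `w ⪯ v` reachable from `v` by a path of length at most `s`
whose internal vertices are all `≻ v`. -/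
def RSet (G : SimpleGraph V) (le : V → V → Prop) (v : V) (s : ℕ) : Set V :=
  {w | le w v ∧ ∃ p : G.Walk v w, p.length ≤ s ∧
    ∀ u ∈ p.support, u ≠ v → u ≠ w → (le v u ∧ u ≠ v)}

/-- `Q(G,⪯,v,s)`: vertices `w ⪯ v` reachable from `v` by a path of length at most `s`
whose internal vertices are all `≻ w`. -/
def QSet (G : SimpleGraph V) (le : V → V → Prop) (v : V) (s : ℕ) : Set V :=
  {w | le w v ∧ ∃ p : G.Walk v w, p.length ≤ s ∧
    ∀ u ∈ p.support, u ≠ v → u ≠ w → (le w u ∧ u ≠ w)}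

/-- The `s`-strong colouring number of `G` is at most `c`. -/
def ScolLE (G : SimpleGraph V) (s : ℕ) (c : ℕ) : Prop :=
  ∃ le : V → V → Prop, IsLinearOrder V le ∧
    ∀ v, (RSet G le v s).Finite ∧ (RSet G le v s).ncard ≤ c

/-- The `s`-weak colouring number of `G` is at most `c`. -/
def WcolLE (G : SimpleGraph V) (s : ℕ) (c : ℕ) : Prop :=
  ∃ le : V → V → Prop, IsLinearOrder V le ∧
    ∀ v, (QSet G le v s).Finite ∧ (QSet G le v s).ncard ≤ c

/-- The queue-number of `G` is at most `q`: there is a linear order of `V(G)` and an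
assignment of edges to `q` queues such that no two edges in the same queue nest. -/
def QueueLE (G : SimpleGraph V) (q : ℕ) : Prop :=
  ∃ le : V → V → Prop, IsLinearOrder V le ∧
    ∃ σ : V → V → ℕ,
      (∀ u v, σ u v = σ v u) ∧
      (∀ ⦃u v⦄, G.Adj u v → σ u v < q) ∧
      (∀ a b c d, G.Adj a b → G.Adj c d → σ a b = σ c d →
        (le a b ∧ a ≠ b) → (le c d ∧ c ≠ d) →
        ¬((le a c ∧ a ≠ c) ∧ (le d b ∧ d ≠ b)))

/-- A `(k,d)`-shortcut system for `G`: a set of paths of length at most `k` such that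
every vertex is an internal vertex of at most `d` of the paths. -/
structure ShortcutSystem (G : SimpleGraph V) (k d : ℕ) where
  paths : Set ((u : V) × (v : V) × G.Walk u v)
  isPath : ∀ p ∈ paths, p.2.2.IsPath
  lengthLE : ∀ p ∈ paths, p.2.2.length ≤ k
  internal : ∀ w : V,
    {p ∈ paths | w ∈ p.2.2.support ∧ w ≠ p.1 ∧ w ≠ p.2.1}.Finite ∧
    {p ∈ paths | w ∈ p.2.2.support ∧ w ≠ p.1 ∧ w ≠ p.2.1}.ncard ≤ d

/-- The supergraph `G^𝒫` of `G` obtained by adding an edge `uv` whenever `𝒫`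
contains a `(u,v)`-path. -/
def shortcutGraph (G : SimpleGraph V) {k d : ℕ} (P : ShortcutSystem G k d) : SimpleGraph V where
  Adj u v := u ≠ v ∧ (G.Adj u v ∨ ∃ p ∈ P.paths, (p.1 = u ∧ p.2.1 = v) ∨ (p.1 = v ∧ p.2.1 = u))
  symm := by
    constructor
    rintro u v ⟨h, h'⟩
    refine ⟨h.symm, ?_⟩
    rcases h' with h' | ⟨p, hp, h'⟩
    · exact Or.inl h'.symm
    · exact Or.inr ⟨p, hp, by tauto⟩
  loopless := ⟨fun v h => h.1 rfl⟩

/-- A `d`-clique lift of `G`: a choice `M v ⊆ N(v)` with `|M v| ≤ d` for each vertex `v`. -/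
structure CliqueLift (G : SimpleGraph V) (d : ℕ) where
  M : V → Set V
  subset_nbhd : ∀ v, M v ⊆ G.neighborSet v
  finite : ∀ v, (M v).Finite
  card_le : ∀ v, (M v).ncard ≤ d

/-- The graph `G^ℳ` obtained from `G` by adding the edge `uw` whenever there is a vertex `v`
with `u ∈ M v` and `w ∈ N(v)`. -/
def cliqueLiftGraph (G : SimpleGraph V) {d : ℕ} (ℳ : CliqueLift G d) : SimpleGraph V where
  Adj u w := u ≠ w ∧ (G.Adj u w ∨ ∃ v, (u ∈ ℳ.M v ∧ w ∈ G.neighborSet v) ∨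
    (w ∈ ℳ.M v ∧ u ∈ G.neighborSet v))
  symm := by
    constructor
    rintro u w ⟨h, h'⟩
    refine ⟨h.symm, ?_⟩
    rcases h' with h' | ⟨v, h'⟩
    · exact Or.inl h'.symm
    · exact Or.inr ⟨v, by tauto⟩
  loopless := ⟨fun v h => h.1 rfl⟩

/-- The `m × m` grid graph. -/
def gridGraph (m : ℕ) : SimpleGraph (Fin m × Fin m) where
  Adj a b := |(a.1 : ℤ) - b.1| + |(a.2 : ℤ) - b.2| = 1
  symm := by
    constructor
    intro a b h
    rw [abs_sub_comm ((b.1 : ℤ)), abs_sub_comm ((b.2 : ℤ))]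
    exact h
  loopless := by constructor; intro a h; simp at h

/-!
Order `G ⊠ H` lexicographically, by the order of `G` first. A walk in `G ⊠ H` projects onto a
walk in `G` that is no longer and whose internal vertices are first coordinates of internal
vertices of the original walk; as the lexicographic order is monotone in the first coordinate,
the constraints defining `R` and `Q` pass to the projection. The projection onto `H` puts the
second coordinate into the closed `H^s`-neighbourhood, so `R((v, w)) ⊆ R(v) × N_{H^s}[w]`, and
likewise for `Q`.
-/

section General

variable {α β : Type*}

instance IsPartialOrder.isStrictOrder_and_ne (r : α → α → Prop) [IsPartialOrder α r] :
    IsStrictOrder α (fun a b => r a b ∧ a ≠ b) where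
  irrefl _ h := h.2 rfl
  trans _ _ _ hab hbc := ⟨_root_.trans hab.1 hbc.1, fun h => hab.2 (antisymm hab.1 (h ▸ hbc.1))⟩

instance IsLinearOrder.trichotomous_and_ne (r : α → α → Prop) [IsLinearOrder α r] :
    Std.Trichotomous (fun a b => r a b ∧ a ≠ b) where
  trichotomous a b hab hba := by
    by_contra h
    exact (total_of r a b).elim (fun h' => hab ⟨h', h⟩) (fun h' => hba ⟨h', Ne.symm h⟩)

instance Prod.Lex.isLinearOrder_and_ne (r : α → α → Prop) (s : β → β → Prop)
    [IsLinearOrder α r] [IsLinearOrder β s] :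
    IsLinearOrder (α × β) (Prod.Lex (fun a b => r a b ∧ a ≠ b) s) := {}

theorem Prod.Lex.fst_of_and_ne {r : α → α → Prop} {s : β → β → Prop} [Std.Refl r] :
    ∀ {a b : α × β}, Prod.Lex (fun a b => r a b ∧ a ≠ b) s a b → r a.1 b.1
  | _, _, .left _ _ h => h.1
  | _, _, .right _ _ => refl _

theorem exists_isLinearOrder (α : Type*) : ∃ r : α → α → Prop, IsLinearOrder α r := by
  classical
  let := linearOrderOfSTO (WellOrderingRel (α := α))
  exact ⟨(· ≤ ·), inferInstance⟩

theorem Set.finite_and_ncard_le_of_subset_prod {s : Set (α × β)} {t : Set α} {u : Set β}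
    {m n : ℕ} (h : s ⊆ t ×ˢ u) (ht : t.Finite ∧ t.ncard ≤ m) (hu : u.Finite ∧ u.ncard ≤ n) :
    s.Finite ∧ s.ncard ≤ m * n :=
  have htu : (t ×ˢ u).Finite := ht.1.prod hu.1
  ⟨htu.subset h, calc
    s.ncard ≤ (t ×ˢ u).ncard := Set.ncard_le_ncard h htu
    _ = t.ncard * u.ncard := Set.ncard_prod
    _ ≤ m * n := Nat.mul_le_mul ht.2 hu.2⟩

theorem SimpleGraph.Walk.exists_walk_of_adj_imp_eq_or_adj {G : SimpleGraph α}
    {G' : SimpleGraph β} (f : α → β) (hf : ∀ ⦃a b⦄, G.Adj a b → f a = f b ∨ G'.Adj (f a) (f b)) :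
    ∀ {a b : α} (p : G.Walk a b),
      ∃ q : G'.Walk (f a) (f b), q.length ≤ p.length ∧ q.support ⊆ p.support.map f
  | _, _, .nil => ⟨.nil, le_rfl, by simp⟩
  | a, _, .cons h p => by
    obtain ⟨q, hq, hsupp⟩ := exists_walk_of_adj_imp_eq_or_adj f hf p
    rcases hf h with heq | hadj
    · refine ⟨q.copy heq.symm rfl, by simp; omega, ?_⟩
      simpa using List.Subset.trans hsupp (List.subset_cons_self _ _)
    · exact ⟨.cons hadj q, by simpa using hq, by simpa using List.cons_subset_cons _ hsupp⟩

theorem MaxDegLE.finite_and_ncard_insert_le {X : Type} {G : SimpleGraph X} {d : ℕ}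
    (h : MaxDegLE G d) (v : X) :
    (insert v (G.neighborSet v)).Finite ∧ (insert v (G.neighborSet v)).ncard ≤ d + 1 :=
  ⟨(h v).1.insert v, (Set.ncard_insert_le _ _).trans (Nat.add_le_add_right (h v).2 1)⟩

end General

section StrongProd

variable {G : SimpleGraph V} {H : SimpleGraph W}

theorem strongProd_exists_walk_fst {a b : V × W} (p : (G ⊠ H).Walk a b) :
    ∃ q : G.Walk a.1 b.1, q.length ≤ p.length ∧ ∀ z ∈ q.support, z ≠ a.1 → z ≠ b.1 →
      ∃ c ∈ p.support, c ≠ a ∧ c ≠ b ∧ c.1 = z := by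
  obtain ⟨q, hq, hsupp⟩ :=
    p.exists_walk_of_adj_imp_eq_or_adj Prod.fst fun _ _ (h : (G ⊠ H).Adj _ _) => h.2.1
  refine ⟨q, hq, fun z hz hza hzb => ?_⟩
  obtain ⟨c, hc, rfl⟩ := List.mem_map.1 (hsupp hz)
  exact ⟨c, hc, fun h => hza (h ▸ rfl), fun h => hzb (h ▸ rfl), rfl⟩

theorem strongProd_snd_mem_insert_neighborSet_powG {s : ℕ} {a b : V × W}
    (p : (G ⊠ H).Walk a b) (hp : p.length ≤ s) :
    b.2 ∈ insert a.2 ((powG H s).neighborSet a.2) := by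
  obtain ⟨q, hq, -⟩ :=
    p.exists_walk_of_adj_imp_eq_or_adj Prod.snd fun _ _ (h : (G ⊠ H).Adj _ _) => h.2.2
  by_cases h : b.2 = a.2
  · exact Or.inl h
  · exact Or.inr ⟨Ne.symm h, q, hq.trans hp⟩

variable {le : V → V → Prop} {leP : V × W → V × W → Prop}

theorem RSet_strongProd_subset (hle : ∀ {a b}, leP a b → le a.1 b.1) (v : V × W) (s : ℕ) :
    RSet (G ⊠ H) leP v s ⊆ RSet G le v.1 s ×ˢ insert v.2 ((powG H s).neighborSet v.2) := by
  rintro b ⟨hbv, p, hp, hint⟩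
  obtain ⟨q, hq, hsupp⟩ := strongProd_exists_walk_fst p
  refine ⟨⟨hle hbv, q, hq.trans hp, fun z hz hzv hzb => ?_⟩,
    strongProd_snd_mem_insert_neighborSet_powG p hp⟩
  obtain ⟨c, hc, hcv, hcb, rfl⟩ := hsupp z hz hzv hzb
  exact ⟨hle (hint c hc hcv hcb).1, hzv⟩

theorem QSet_strongProd_subset (hle : ∀ {a b}, leP a b → le a.1 b.1) (v : V × W) (s : ℕ) :
    QSet (G ⊠ H) leP v s ⊆ QSet G le v.1 s ×ˢ insert v.2 ((powG H s).neighborSet v.2) := by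
  rintro b ⟨hbv, p, hp, hint⟩
  obtain ⟨q, hq, hsupp⟩ := strongProd_exists_walk_fst p
  refine ⟨⟨hle hbv, q, hq.trans hp, fun z hz hzv hzb => ?_⟩,
    strongProd_snd_mem_insert_neighborSet_powG p hp⟩
  obtain ⟨c, hc, hcv, hcb, rfl⟩ := hsupp z hz hzv hzb
  exact ⟨hle (hint c hc hcv hcb).1, hzb⟩

end StrongProd

theorem col_strongProd_general {V W : Type} (G : SimpleGraph V) (H : SimpleGraph W)
    (s : ℕ) (Δ : ℕ) (hΔ : MaxDegLE (powG H s) Δ) :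
    (∀ c, ScolLE G s c → ScolLE (G ⊠ H) s (c * (Δ + 1))) ∧
    (∀ c, WcolLE G s c → WcolLE (G ⊠ H) s (c * (Δ + 1))) := by
  obtain ⟨leW, _⟩ := exists_isLinearOrder W
  constructor
  · rintro c ⟨leG, _, hR⟩
    exact ⟨Prod.Lex (fun a b => leG a b ∧ a ≠ b) leW, inferInstance, fun v =>
      Set.finite_and_ncard_le_of_subset_prod (RSet_strongProd_subset Prod.Lex.fst_of_and_ne v s)
        (hR v.1) (MaxDegLE.finite_and_ncard_insert_le hΔ v.2)⟩
  · rintro c ⟨leG, _, hQ⟩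
    exact ⟨Prod.Lex (fun a b => leG a b ∧ a ≠ b) leW, inferInstance, fun v =>
      Set.finite_and_ncard_le_of_subset_prod (QSet_strongProd_subset Prod.Lex.fst_of_and_ne v s)
        (hQ v.1) (MaxDegLE.finite_and_ncard_insert_le hΔ v.2)⟩

/-- For all graphs `G`, `H` and `s ≥ 1`: `scol_s(G ⊠ H) ≤ scol_s(G)·(Δ(H^s)+1)` and
`wcol_s(G ⊠ H) ≤ wcol_s(G)·(Δ(H^s)+1)`. -/
theorem col_strongProd {V W : Type} (G : SimpleGraph V) (H : SimpleGraph W)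
    (s : ℕ) (hs : 1 ≤ s) (Δ : ℕ) (hΔ : MaxDegLE (powG H s) Δ) :
    (∀ c, ScolLE G s c → ScolLE (G ⊠ H) s (c * (Δ + 1))) ∧
    (∀ c, WcolLE G s c → WcolLE (G ⊠ H) s (c * (Δ + 1))) :=
  col_strongProd_general G H s Δ hΔ
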